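/- arXiv:2408.14059 — 2 statements merged into one kernel-verified Lean document; each statement's English description precedes it below -/
import Mathlib

section
/- Let s be a binary sequence that is linearly recurrent with constant C > 0, i.e., any two consecutive occurrences of any factor of length n of s are at distance at most C·n. Then for every k ≥ 1 there exists a constant c > 0 such that C_{2k}(s, N) ≥ c·N for all sufficiently large N. -/
/-- The correlation sum `V(s, M, D)` of a sequence `s`. -/
def corrV (s : ℕ → ℕ) (M : ℕ) {k : ℕ} (D : Fin k → ℕ) : ℤ :=
  ∑ n ∈ Finset.range M, (-1 : ℤ) ^ (∑ i, s (n + D i))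

/-- The `N`th correlation measure of order `k` of the sequence `s`. -/
noncomputable def corrMeasure (s : ℕ → ℕ) (k N : ℕ) : ℕ :=
  sSup {c : ℕ | ∃ M : ℕ, ∃ D : Fin k → ℕ, 0 < M ∧ StrictMono D ∧
    (∀ i, M + D i ≤ N) ∧ c = (corrV s M D).natAbs}

/-- `s` is linearly recurrent with constant `C`: after any occurrence (at position `i`)
of any length-`n` factor of `s`, the next occurrence is at distance at most `C·n`. -/
def LinRec (s : ℕ → ℕ) (C : ℝ) : Prop :=
  ∀ i n : ℕ, 0 < n → ∃ j : ℕ, i < j ∧ (j : ℝ) ≤ i + C * n ∧ ∀ m < n, s (j + m) = s (i + m)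


/-!
A linearly recurrent sequence is locally periodic: the prefix of length `n` recurs at some
`0 < j ≤ C n`, so `s` has period `j` on `[0, n + j)`. Taking `d` a multiple of `j` in `[k, k + j)`,
the shifts `0, …, k - 1, d, …, d + k - 1` pair each `s (x + i)` with the equal value
`s (x + d + i)`, so every term of the correlation sum is `1`, and the sum has length about `n`,
while the window it needs has length `n + j ≤ (1 + C) n`.
-/

open Finset

lemma natAbs_corrV_le (s : ℕ → ℕ) (M : ℕ) {k : ℕ} (D : Fin k → ℕ) :
    (corrV s M D).natAbs ≤ M := by
  have h : |corrV s M D| ≤ M :=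
    calc |corrV s M D| ≤ ∑ n ∈ range M, |(-1 : ℤ) ^ (∑ i, s (n + D i))| := abs_sum_le_sum_abs _ _
      _ = M := by simp
  rw [Int.abs_eq_natAbs] at h
  exact_mod_cast h

-- `0 < k` is what bounds the set: for `k = 0` it is unbounded and its `sSup` is the junk value `0`.
lemma natAbs_corrV_le_corrMeasure (s : ℕ → ℕ) {k M N : ℕ} (hk : 0 < k) {D : Fin k → ℕ}
    (hM : 0 < M) (hD : StrictMono D) (hDN : ∀ i, M + D i ≤ N) :
    (corrV s M D).natAbs ≤ corrMeasure s k N := by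
  refine le_csSup ⟨N, ?_⟩ ⟨M, D, hM, hD, hDN, rfl⟩
  rintro c ⟨M', D', -, -, hD'N, rfl⟩
  have := hD'N ⟨0, hk⟩
  have := natAbs_corrV_le s M' D'
  omega

def pairedShift (k d : ℕ) (i : Fin (2 * k)) : ℕ :=
  if (i : ℕ) < k then i else d + (i - k)

lemma pairedShift_strictMono {k d : ℕ} (h : k ≤ d) : StrictMono (pairedShift k d) := by
  intro a b hab
  have : (a : ℕ) < b := hab
  unfold pairedShift
  split_ifs <;> omega

lemma pairedShift_lt (k d : ℕ) (i : Fin (2 * k)) : pairedShift k d i < d + k := by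
  have := i.isLt
  unfold pairedShift
  split_ifs <;> omega

lemma sum_pairedShift (s : ℕ → ℕ) (k d x : ℕ) :
    ∑ i, s (x + pairedShift k d i) = ∑ i ∈ range k, s (x + i) + ∑ i ∈ range k, s (x + d + i) := by
  simp only [pairedShift]
  rw [Fin.sum_univ_eq_sum_range (fun i => s (x + if i < k then i else d + (i - k))), two_mul,
    sum_range_add]
  congr 1 <;> refine sum_congr rfl fun i hi => ?_
  · simp [mem_range.mp hi]
  · simp [add_assoc]

lemma corrV_pairedShift {s : ℕ → ℕ} {M k d : ℕ}
    (h : ∀ x < M, ∀ i < k, s (x + d + i) = s (x + i)) : corrV s M (pairedShift k d) = M := by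
  have hterm : ∀ x ∈ range M, (-1 : ℤ) ^ (∑ i, s (x + pairedShift k d i)) = 1 := by
    intro x hx
    rw [sum_pairedShift, sum_congr rfl fun i hi => h x (mem_range.mp hx) i (mem_range.mp hi)]
    exact Even.neg_one_pow ⟨_, rfl⟩
  rw [corrV, sum_congr rfl hterm]
  simp

lemma apply_add_mul_eq_of_repeat {s : ℕ → ℕ} {n j : ℕ} (h : ∀ m < n, s (m + j) = s m) :
    ∀ t m, m + t * j < n + j → s (m + t * j) = s m
  | 0, m, _ => by simp
  | t + 1, m, hm => by
    rw [add_mul, one_mul, ← add_assoc] at hm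
    rw [add_mul, one_mul, ← add_assoc, h _ (by omega)]
    exact apply_add_mul_eq_of_repeat h t m (by omega)

lemma exists_mul_mem_Ico {j : ℕ} (hj : 0 < j) (k : ℕ) : ∃ t, k ≤ t * j ∧ t * j < k + j := by
  refine ⟨(k + j - 1) / j, ?_⟩
  have := Nat.div_add_mod' (k + j - 1) j
  have := Nat.mod_lt (k + j - 1) hj
  omega

lemma LinRec.le_corrMeasure {s : ℕ → ℕ} {C : ℝ} (hlr : LinRec s C) {k n N : ℕ} (hk : 0 < k)
    (hkn : 2 * k ≤ n) (hN : n + C * n ≤ N) : n + 1 - 2 * k ≤ corrMeasure s (2 * k) N := by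
  obtain ⟨j, hj, hjn, hrep⟩ := hlr 0 n (by omega)
  have hper := apply_add_mul_eq_of_repeat (s := s) (n := n) (j := j)
    fun m hm => by simpa [add_comm] using hrep m hm
  have hjN : n + j ≤ N := by
    have : (n : ℝ) + j ≤ N := by push_cast at hjn; linarith
    exact_mod_cast this
  obtain ⟨t, hkt, htk⟩ := exists_mul_mem_Ico hj k
  have hval : corrV s (n + 1 - 2 * k) (pairedShift k (t * j)) = (n + 1 - 2 * k : ℕ) := by
    refine corrV_pairedShift fun x hx i hi => ?_
    rw [add_right_comm]
    exact hper t (x + i) (by omega)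
  have := natAbs_corrV_le_corrMeasure s (M := n + 1 - 2 * k) (N := N) (by omega) (by omega)
    (pairedShift_strictMono hkt) fun i => by have := pairedShift_lt k (t * j) i; omega
  rwa [hval, Int.natAbs_natCast] at this

theorem stmt2_general (s : ℕ → ℕ) (C : ℝ) (hC : 0 < C)
    (hlr : LinRec s C) (k : ℕ) (hk : 1 ≤ k) :
    ∃ c : ℝ, 0 < c ∧ ∃ N₀ : ℕ, ∀ N ≥ N₀, c * N ≤ (corrMeasure s (2 * k) N : ℝ) := by
  have hC1 : 0 < 1 + C := by linarith
  refine ⟨1 / (2 * (1 + C)), by positivity, ⌈4 * k * (1 + C)⌉₊, fun N hN => ?_⟩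
  set n := ⌊(N : ℝ) / (1 + C)⌋₊
  have h4k : 4 * k ≤ (N : ℝ) / (1 + C) := by
    rw [le_div_iff₀ hC1]
    exact Nat.ceil_le.mp hN
  have hn_lt : (N : ℝ) / (1 + C) < n + 1 := Nat.lt_floor_add_one _
  have hn_le : (n : ℝ) ≤ N / (1 + C) := Nat.floor_le (by positivity)
  have hkn : 2 * k ≤ n := by
    have : ((4 * k : ℕ) : ℝ) < (n + 1 : ℕ) := by push_cast; linarith
    have : 4 * k < n + 1 := by exact_mod_cast this
    omega
  have hnN : n + C * n ≤ N := by
    rw [le_div_iff₀ hC1] at hn_le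
    linarith
  have hcorr : (n + 1 : ℝ) ≤ corrMeasure s (2 * k) N + 2 * k := by
    have := hlr.le_corrMeasure hk hkn hnN
    exact_mod_cast (by omega : n + 1 ≤ corrMeasure s (2 * k) N + 2 * k)
  have hc : 1 / (2 * (1 + C)) * N = N / (1 + C) / 2 := by field_simp
  linarith

/-- A linearly recurrent binary sequence has linearly large even-order correlation measures. -/
theorem stmt2 (s : ℕ → ℕ) (hbin : ∀ n, s n ≤ 1) (C : ℝ) (hC : 0 < C)
    (hlr : LinRec s C) (k : ℕ) (hk : 1 ≤ k) :
    ∃ c : ℝ, 0 < c ∧ ∃ N₀ : ℕ, ∀ N ≥ N₀, c * N ≤ (corrMeasure s (2 * k) N : ℝ) :=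
  stmt2_general s C hC hlr k hk
end

section
/- Let F be the sequence defined by F(0) = 1, F(1) = 2, F(n+2) = F(n+1) + F(n). Every non-negative integer n has a unique representation n = Σ_i c_i F(i) with c_i ∈ {0,1}, no two consecutive c_i equal to 1, and leading coefficient nonzero (Zeckendorf's theorem). -/
/-!
Since `F i = fib (i + 2)`, this is Mathlib's Zeckendorf theorem (`Nat.zeckendorf`, stated for
decreasing lists of Fibonacci indices `≥ 2` with gaps `≥ 2`) transported along the bijection
sending an index set `S` without two consecutive elements to the decreasing list of the `i + 2`,
`i ∈ S`.
-/

open Nat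

lemma eq_fib_add_two_of_recurrence {F : ℕ → ℕ} (h0 : F 0 = 1) (h1 : F 1 = 2)
    (hrec : ∀ n, F (n + 2) = F (n + 1) + F n) (i : ℕ) : F i = fib (i + 2) := by
  induction i using Nat.twoStepInduction with
  | zero => simpa using h0
  | one => simpa [fib_add_two] using h1
  | more n ih₁ ih₂ => rw [hrec, ih₁, ih₂, fib_add_two (n := n + 2)]; ring

namespace List

variable {l : List ℕ}

lemma Pairwise.not_add_one_mem_of_gap (h : l.Pairwise (fun a b ↦ b + 2 ≤ a)) :
    ∀ i ∈ l, i + 1 ∉ l := by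
  have : Std.Symm (fun a b : ℕ ↦ a ≠ b + 1 ∧ b ≠ a + 1) := ⟨fun _ _ ↦ And.symm⟩
  have hgap : l.Pairwise (fun a b ↦ a ≠ b + 1 ∧ b ≠ a + 1) := h.imp fun hab ↦ by omega
  exact fun i hi hi₁ ↦ (hgap.forall hi hi₁ (by omega)).2 rfl

namespace IsZeckendorfRep

lemma pairwise_append_zero (h : l.IsZeckendorfRep) :
    (l ++ [0]).Pairwise (fun a b ↦ b + 2 ≤ a) :=
  have : IsTrans ℕ (fun a b ↦ b + 2 ≤ a) := ⟨fun _ _ _ hab hbc ↦ by omega⟩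
  IsChain.pairwise h

lemma pairwise (h : l.IsZeckendorfRep) : l.Pairwise (fun a b ↦ b + 2 ≤ a) :=
  (pairwise_append.1 h.pairwise_append_zero).1

lemma two_le (h : l.IsZeckendorfRep) {a : ℕ} (ha : a ∈ l) : 2 ≤ a :=
  (pairwise_append.1 h.pairwise_append_zero).2.2 a ha 0 (mem_singleton_self 0)

lemma pairwise_map_sub_two (h : l.IsZeckendorfRep) :
    (l.map (· - 2)).Pairwise (fun a b ↦ b + 2 ≤ a) :=
  List.pairwise_map.2 <| h.pairwise.imp_of_mem fun ha hb hab ↦ by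
    have := h.two_le ha; have := h.two_le hb; omega

lemma sum_fib_toFinset_map_sub_two (h : l.IsZeckendorfRep) :
    ∑ i ∈ (l.map (· - 2)).toFinset, fib (i + 2) = (l.map fib).sum := by
  rw [List.sum_toFinset _ (h.pairwise_map_sub_two.imp fun hab ↦ by omega), List.map_map]
  exact congrArg List.sum <| List.map_congr_left fun a ha ↦ by
    simp only [Function.comp_apply, Nat.sub_add_cancel (h.two_le ha)]

end IsZeckendorfRep

end List

namespace Finset

def zeckendorfList (S : Finset ℕ) : List ℕ := ((S.sort (· ≤ ·)).map (· + 2)).reverse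

variable {S : Finset ℕ}

lemma isZeckendorfRep_zeckendorfList (hS : ∀ i ∈ S, i + 1 ∉ S) :
    S.zeckendorfList.IsZeckendorfRep := by
  refine List.Pairwise.isChain <| List.pairwise_append.2 ⟨?_, by simp, by simp [zeckendorfList]⟩
  rw [zeckendorfList, List.pairwise_reverse, List.pairwise_map]
  refine S.sortedLT_sort.pairwise.imp_of_mem fun {a b} ha hb hab ↦ ?_
  have : b ≠ a + 1 := fun h ↦ hS a ((mem_sort _).1 ha) (h ▸ (mem_sort _).1 hb)
  omega

lemma sum_fib_zeckendorfList (S : Finset ℕ) :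
    (S.zeckendorfList.map fib).sum = ∑ i ∈ S, fib (i + 2) := by
  rw [zeckendorfList, List.map_reverse, List.sum_reverse, List.map_map,
    ← List.sum_toFinset _ (S.sort_nodup (· ≤ ·)), sort_toFinset]
  rfl

lemma toFinset_map_sub_two_zeckendorfList (S : Finset ℕ) :
    (S.zeckendorfList.map (· - 2)).toFinset = S := by
  simp [zeckendorfList, List.map_reverse, Function.comp_def]

end Finset

/-- Zeckendorf's theorem: with `F(0)=1`, `F(1)=2`, `F(n+2)=F(n+1)+F(n)`, every
natural number has a unique representation as a sum of non-consecutive terms of `F`. -/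
theorem stmt9 (F : ℕ → ℕ) (h0 : F 0 = 1) (h1 : F 1 = 2)
    (hrec : ∀ n, F (n + 2) = F (n + 1) + F n) (n : ℕ) :
    ∃! S : Finset ℕ, (∀ i ∈ S, i + 1 ∉ S) ∧ n = ∑ i ∈ S, F i := by
  obtain rfl : F = fun i ↦ fib (i + 2) := funext (eq_fib_add_two_of_recurrence h0 h1 hrec)
  have hrep := isZeckendorfRep_zeckendorf n
  refine ⟨((zeckendorf n).map (· - 2)).toFinset, ⟨?_, ?_⟩, ?_⟩
  · simpa only [List.mem_toFinset] using hrep.pairwise_map_sub_two.not_add_one_mem_of_gap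
  · rw [hrep.sum_fib_toFinset_map_sub_two, sum_zeckendorf_fib]
  · rintro S ⟨hS, rfl⟩
    rw [← S.sum_fib_zeckendorfList, zeckendorf_sum_fib (Finset.isZeckendorfRep_zeckendorfList hS),
      S.toFinset_map_sub_two_zeckendorfList]
end
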